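/- arXiv:1603.08264 — 11 statements merged into one kernel-verified Lean document; each statement's English description precedes it below -/
import Mathlib

section
/- Let X and Y be topological spaces with Y Hausdorff. Let M be a dense subset of X carrying a monoid structure, and for each m ∈ M let λ_m, ρ_m : X → X be continuous maps such that for all m, m' ∈ M one has λ_m(m') = m·m' and ρ_m(m') = m'·m (viewing M as a subset of X). Similarly, let N be a dense subset of Y with a monoid structure and continuous maps λ'_n, ρ'_n : Y → Y such that λ'_n(n') = n·n' and ρ'_n(n') = n'·n for all n, n' ∈ N. Let f : X → Y be a continuous map with f(M) ⊆ N whose restriction to M is a monoid homomorphism into N. Then for every m ∈ M, f ∘ λ_m = λ'_{f(m)} ∘ f and f ∘ ρ_m = ρ'_{f(m)} ∘ f. -/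
theorem comp_eq_comp_of_eq_on_dense {X Y : Type*} [TopologicalSpace X] [TopologicalSpace Y]
    [T2Space Y] {M : Set X} (hM : Dense M) {f : X → Y} (hf : Continuous f) {a : X → X}
    {b : Y → Y} (ha : Continuous a) (hb : Continuous b) (h : ∀ m : M, f (a m) = b (f m)) :
    f ∘ a = b ∘ f :=
  hM.denseRange_val.equalizer (hf.comp ha) (hb.comp hf) (funext h)

theorem stmt0_general {X Y : Type*} [TopologicalSpace X] [TopologicalSpace Y] [T2Space Y]
    (M : Set X) (hM : Dense M) [Monoid M]
    (lam rho : M → X → X)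
    (hlam_cont : ∀ m : M, Continuous (lam m))
    (hrho_cont : ∀ m : M, Continuous (rho m))
    (hlam : ∀ m m' : M, lam m (m' : X) = ((m * m' : M) : X))
    (hrho : ∀ m m' : M, rho m (m' : X) = ((m' * m : M) : X))
    (N : Set Y) [Monoid N]
    (lam' rho' : N → Y → Y)
    (hlam'_cont : ∀ n : N, Continuous (lam' n))
    (hrho'_cont : ∀ n : N, Continuous (rho' n))
    (hlam' : ∀ n n' : N, lam' n (n' : Y) = ((n * n' : N) : Y))
    (hrho' : ∀ n n' : N, rho' n (n' : Y) = ((n' * n : N) : Y))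
    (f : X → Y) (hf : Continuous f)
    (F : M →* N) (hF : ∀ m : M, (F m : Y) = f (m : X)) :
    ∀ m : M, f ∘ lam m = lam' (F m) ∘ f ∧ f ∘ rho m = rho' (F m) ∘ f := by
  intro m
  constructor
  · refine comp_eq_comp_of_eq_on_dense hM hf (hlam_cont m) (hlam'_cont (F m)) fun m' => ?_
    rw [hlam, ← hF, ← hF, hlam', map_mul]
  · refine comp_eq_comp_of_eq_on_dense hM hf (hrho_cont m) (hrho'_cont (F m)) fun m' => ?_
    rw [hrho, ← hF, ← hF, hrho', map_mul]

/-- Morphisms of Boolean spaces with internal monoids preserve the biactions: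
if `f : X → Y` is continuous, maps the dense submonoid `M` into `N` restricting to a
monoid homomorphism, and the action components are continuous extensions of the
monoid multiplications, then `f ∘ λ_m = λ'_{f(m)} ∘ f` and `f ∘ ρ_m = ρ'_{f(m)} ∘ f`. -/
theorem stmt0 {X Y : Type*} [TopologicalSpace X] [TopologicalSpace Y] [T2Space Y]
    (M : Set X) (hM : Dense M) [Monoid M]
    (lam rho : M → X → X)
    (hlam_cont : ∀ m : M, Continuous (lam m))
    (hrho_cont : ∀ m : M, Continuous (rho m))
    (hlam : ∀ m m' : M, lam m (m' : X) = ((m * m' : M) : X))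
    (hrho : ∀ m m' : M, rho m (m' : X) = ((m' * m : M) : X))
    (N : Set Y) (hN : Dense N) [Monoid N]
    (lam' rho' : N → Y → Y)
    (hlam'_cont : ∀ n : N, Continuous (lam' n))
    (hrho'_cont : ∀ n : N, Continuous (rho' n))
    (hlam' : ∀ n n' : N, lam' n (n' : Y) = ((n * n' : N) : Y))
    (hrho' : ∀ n n' : N, rho' n (n' : Y) = ((n' * n : N) : Y))
    (f : X → Y) (hf : Continuous f)
    (F : M →* N) (hF : ∀ m : M, (F m : Y) = f (m : X)) :
    ∀ m : M, f ∘ lam m = lam' (F m) ∘ f ∧ f ∘ rho m = rho' (F m) ∘ f :=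
  stmt0_general M hM lam rho hlam_cont hrho_cont hlam hrho N lam' rho' hlam'_cont hrho'_cont hlam'
    hrho' f hf F hF
end

section
/- Let Σ be a type, M a monoid, and τ : (Σ × {0,1})* → M a monoid homomorphism from the free monoid on Σ × {0,1}. Define ξ : Σ* → ◊M by ξ(w) := ({τ(w^{(i)}) : 0 ≤ i < |w|}, τ(w⁰)). Then: (1) ξ is a monoid homomorphism from the free monoid Σ* to ◊M; (2) the second projection satisfies π₂(ξ(w)) = τ(w⁰) for all w; and (3) for every subset V ⊆ M, writing L_Φ := τ⁻¹(V), one has ξ⁻¹({(S,m) ∈ ◊M : S ∩ V ≠ ∅}) = {w ∈ Σ* : there exists i < |w| with w^{(i)} ∈ L_Φ}. -/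
/-- The multiplication of the unary Schützenberger product `◊M` on `Finset M × M`:
`(S, m) * (T, n) = (S·n ∪ m·T, m·n)`. -/
def dMul {M : Type*} [Monoid M] [DecidableEq M] (p q : Finset M × M) : Finset M × M :=
  (p.1.image (fun s => s * q.2) ∪ q.1.image (fun t => p.2 * t), p.2 * q.2)

/-- `w^{(i)}`: the word over `Σ × 2` obtained from `w` by tagging the `i`-th letter with `1`
(`true`) and all other letters with `0` (`false`). -/
def marked {A : Type*} (w : List A) (i : ℕ) : FreeMonoid (A × Bool) :=
  FreeMonoid.ofList (w.mapIdx fun j c => (c, decide (j = i)))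

/-- `w⁰`: the word over `Σ × 2` obtained from `w` by tagging every letter with `0` (`false`). -/
def unmarked {A : Type*} (w : List A) : FreeMonoid (A × Bool) :=
  FreeMonoid.ofList (w.map fun c => (c, false))

/-- The map `ξ : Σ* → ◊M`, `ξ(w) = ({τ(w^{(i)}) : i < |w|}, τ(w⁰))`. -/
def xiMap {A M : Type*} [Monoid M] [DecidableEq M] (τ : FreeMonoid (A × Bool) →* M)
    (w : List A) : Finset M × M :=
  ((Finset.range w.length).image fun i => τ (marked w i), τ (unmarked w))

/-!
Splitting a position of `v ++ w` according to whether it falls in `v` or in `w` gives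
`(v ++ w)^{(i)} = v^{(i)} w⁰` or `(v ++ w)^{(|v| + i)} = v⁰ w^{(i)}`. Applying `τ`, the marked
images of `v ++ w` are exactly `S·τ(w⁰) ∪ τ(v⁰)·T`, the first component of `ξ(v) * ξ(w)` in `◊M`.
-/

theorem List.mapIdx_eq_map_of_forall {α β : Type*} {f : ℕ → α → β} {g : α → β} {l : List α}
    (h : ∀ i (hi : i < l.length), f i l[i] = g l[i]) : l.mapIdx f = l.map g :=
  List.ext_getElem (by simp) fun i hi _ => by simpa using h i (by simpa using hi)

section Marking

variable {A : Type*}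

theorem unmarked_nil : unmarked ([] : List A) = 1 := rfl

theorem unmarked_append (v w : List A) : unmarked (v ++ w) = unmarked v * unmarked w := by
  simp only [unmarked, List.map_append, FreeMonoid.ofList_append]

theorem ofList_mapIdx_eq_unmarked {w : List A} {p : ℕ → Prop} [DecidablePred p]
    (h : ∀ j < w.length, ¬ p j) :
    FreeMonoid.ofList (w.mapIdx fun j c => (c, decide (p j))) = unmarked w :=
  congrArg FreeMonoid.ofList <| List.mapIdx_eq_map_of_forall fun j hj => by simp [h j hj]

theorem marked_append_of_lt (v w : List A) {i : ℕ} (hi : i < v.length) :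
    marked (v ++ w) i = marked v i * unmarked w := by
  rw [marked, List.mapIdx_append, FreeMonoid.ofList_append,
    ofList_mapIdx_eq_unmarked (w := w) fun j _ => by omega]
  rfl

theorem marked_append_add (v w : List A) (i : ℕ) :
    marked (v ++ w) (v.length + i) = unmarked v * marked w i := by
  rw [marked, List.mapIdx_append, FreeMonoid.ofList_append,
    ofList_mapIdx_eq_unmarked (w := v) fun j hj => by omega]
  simp only [marked, add_comm _ v.length, Nat.add_left_cancel_iff]

end Marking

section Xi

variable {A M : Type*} [Monoid M] [DecidableEq M] (τ : FreeMonoid (A × Bool) →* M)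

theorem exists_mem_xiMap_fst_iff {w : List A} {p : M → Prop} :
    (∃ s ∈ (xiMap τ w).1, p s) ↔ ∃ i < w.length, p (τ (marked w i)) := by
  simp [xiMap]

theorem xiMap_nil : xiMap τ ([] : List A) = (∅, 1) := by
  simp [xiMap, unmarked_nil]

theorem xiMap_append (v w : List A) : xiMap τ (v ++ w) = dMul (xiMap τ v) (xiMap τ w) := by
  refine Prod.ext ?_ (by simp only [xiMap, dMul, unmarked_append, map_mul])
  have left : (Finset.range v.length).image (fun i => τ (marked (v ++ w) i)) =
      (Finset.range v.length).image (fun i => τ (marked v i) * τ (unmarked w)) :=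
    Finset.image_congr fun i hi => by
      simp only [marked_append_of_lt v w (Finset.mem_range.1 hi), map_mul]
  have right : ((Finset.range w.length).map (addLeftEmbedding v.length)).image
        (fun i => τ (marked (v ++ w) i)) =
      (Finset.range w.length).image (fun i => τ (unmarked v) * τ (marked w i)) := by
    simp only [Finset.map_eq_image, Finset.image_image]
    exact Finset.image_congr fun i _ => by simp [marked_append_add]
  simp only [xiMap, dMul, List.length_append, Finset.range_add, Finset.image_union, left, right,
    Finset.image_image, Function.comp_def]

end Xi

/-- If `τ : (Σ×2)* → M` is a monoid homomorphism, then
(1) `ξ(w) = ({τ(w^{(i)})}, τ(w⁰))` is a monoid homomorphism `Σ* → ◊M`;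
(2) the second projection of `ξ(w)` is `τ(w⁰)`;
(3) for `V ⊆ M` with `L_Φ = τ⁻¹(V)`, `ξ⁻¹(◊V × M)` is the set of words having a marked
version in `L_Φ`. -/
theorem stmt2 {A M : Type*} [Monoid M] [DecidableEq M] (τ : FreeMonoid (A × Bool) →* M) :
    (∀ v w : List A, xiMap τ (v ++ w) = dMul (xiMap τ v) (xiMap τ w)) ∧
    (xiMap τ ([] : List A) = (∅, 1)) ∧
    (∀ w : List A, (xiMap τ w).2 = τ (unmarked w)) ∧
    (∀ V : Set M,
      {w : List A | ∃ s ∈ (xiMap τ w).1, s ∈ V} =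
        {w : List A | ∃ i < w.length, marked w i ∈ τ ⁻¹' V}) := by
  exact ⟨xiMap_append τ, xiMap_nil τ, fun _ => rfl,
    fun _ => Set.ext fun _ => exists_mem_xiMap_fst_iff τ⟩
end

section
/- Let X be a Boolean space, M a monoid, and (λ_m)_{m ∈ M} a family of continuous maps X → X (the components of a left action of M on X, i.e., λ_1 = id and λ_{m·m'} = λ_m ∘ λ_{m'}). Let S be a finite subset of M and m ∈ M. Then for every closed K ⊆ X and x ∈ X, the set {λ_s(x) : s ∈ S} ∪ λ_m[K] is closed in X, and the map V(X) × X → V(X) × X sending (K, x) to ({λ_s(x) : s ∈ S} ∪ λ_m[K], λ_m(x)) is continuous, where V(X) × X carries the product topology. -/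
/-!
The map is assembled from three operations on closed sets, each of which pulls the subbasic
sets of the Vietoris topology back to open sets: under `K ↦ f[K]` the preimages of `◊U` and `□U`
are `◊f⁻¹U` and `□f⁻¹U`; under binary union they are a union, resp. an intersection, of two
subbasic sets; under `x ↦ {g_s(x) : s ∈ S}` they are the finite union, resp. intersection, of
the open sets `g_s⁻¹U`. Compactness and the Hausdorff property keep images of closed sets closed.
-/

/-- The points of the Vietoris space of `X`: the closed subsets of `X`. -/
structure VClosed (X : Type*) [TopologicalSpace X] where
  carrier : Set X
  isClosed : IsClosed carrier

/-- The Vietoris topology on the closed subsets of `X`, generated by the subbasic sets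
`◊U = {K : K ∩ U ≠ ∅}` and `□U = {K : K ⊆ U}` for `U` open. -/
instance VClosed.instTopologicalSpace (X : Type*) [TopologicalSpace X] :
    TopologicalSpace (VClosed X) :=
  TopologicalSpace.generateFrom
    ({s | ∃ U : Set X, IsOpen U ∧ s = {K : VClosed X | (K.carrier ∩ U).Nonempty}} ∪
     {s | ∃ U : Set X, IsOpen U ∧ s = {K : VClosed X | K.carrier ⊆ U}})

namespace VClosed

variable {X Y Z ι : Type*} [TopologicalSpace X] [TopologicalSpace Y] [TopologicalSpace Z]

theorem isOpen_setOf_inter_nonempty {U : Set X} (hU : IsOpen U) :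
    IsOpen {K : VClosed X | (K.carrier ∩ U).Nonempty} :=
  TopologicalSpace.isOpen_generateFrom_of_mem (Or.inl ⟨U, hU, rfl⟩)

theorem isOpen_setOf_subset {U : Set X} (hU : IsOpen U) :
    IsOpen {K : VClosed X | K.carrier ⊆ U} :=
  TopologicalSpace.isOpen_generateFrom_of_mem (Or.inr ⟨U, hU, rfl⟩)

theorem continuous_of_isOpen {f : Z → VClosed X}
    (hinter : ∀ U, IsOpen U → IsOpen {z | ((f z).carrier ∩ U).Nonempty})
    (hsubset : ∀ U, IsOpen U → IsOpen {z | (f z).carrier ⊆ U}) : Continuous f := by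
  rw [continuous_generateFrom_iff]
  rintro s (⟨U, hU, rfl⟩ | ⟨U, hU, rfl⟩)
  exacts [hinter U hU, hsubset U hU]

def union (K L : VClosed X) : VClosed X :=
  ⟨K.carrier ∪ L.carrier, K.isClosed.union L.isClosed⟩

theorem continuous_union : Continuous fun p : VClosed X × VClosed X => p.1.union p.2 := by
  refine continuous_of_isOpen (fun U hU => ?_) (fun U hU => ?_)
  · simp only [union, Set.union_inter_distrib_right, Set.union_nonempty, Set.ofPred_or]
    exact (continuous_fst.isOpen_preimage _ (isOpen_setOf_inter_nonempty hU)).union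
      (continuous_snd.isOpen_preimage _ (isOpen_setOf_inter_nonempty hU))
  · simp only [union, Set.union_subset_iff, Set.ofPred_and]
    exact (continuous_fst.isOpen_preimage _ (isOpen_setOf_subset hU)).inter
      (continuous_snd.isOpen_preimage _ (isOpen_setOf_subset hU))

def image [CompactSpace X] [T2Space Y] (f : X → Y) (hf : Continuous f) (K : VClosed X) :
    VClosed Y :=
  ⟨f '' K.carrier, (K.isClosed.isCompact.image hf).isClosed⟩

theorem continuous_image [CompactSpace X] [T2Space Y] {f : X → Y} (hf : Continuous f) :
    Continuous (image f hf) := by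
  refine continuous_of_isOpen (fun U hU => ?_) (fun U hU => ?_)
  · simp only [image, Set.image_inter_nonempty_iff]
    exact isOpen_setOf_inter_nonempty (hU.preimage hf)
  · simp only [image, Set.image_subset_iff]
    exact isOpen_setOf_subset (hU.preimage hf)

def finsetImage [T1Space Y] (S : Finset ι) (g : ι → Y) : VClosed Y :=
  ⟨g '' S, (S.finite_toSet.image g).isClosed⟩

theorem continuous_finsetImage [T1Space Y] (S : Finset ι) {g : ι → Z → Y}
    (hg : ∀ i, Continuous (g i)) : Continuous fun z => finsetImage S fun i => g i z := by
  refine continuous_of_isOpen (fun U hU => ?_) (fun U hU => ?_)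
  · have : {z | ((finsetImage S fun i => g i z).carrier ∩ U).Nonempty} =
        ⋃ i ∈ S, g i ⁻¹' U := by
      ext z
      simp [finsetImage, Set.Nonempty]
    rw [this]
    exact isOpen_biUnion fun i _ => hU.preimage (hg i)
  · have : {z | (finsetImage S fun i => g i z).carrier ⊆ U} = ⋂ i ∈ S, g i ⁻¹' U := by
      ext z
      simp [finsetImage, Set.subset_def]
    rw [this]
    exact isOpen_biInter_finset fun i _ => hU.preimage (hg i)

end VClosed

theorem stmt4_general {X : Type*} [TopologicalSpace X] [CompactSpace X] [T2Space X]
    {M : Type*} (lam : M → X → X)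
    (hcont : ∀ m : M, Continuous (lam m))
    (S : Finset M) (m : M) :
    ∃ hcl : ∀ (K : Set X), IsClosed K → ∀ x : X,
        IsClosed ((fun s : M => lam s x) '' (S : Set M) ∪ lam m '' K),
      Continuous (fun p : VClosed X × X =>
        ((⟨(fun s : M => lam s p.2) '' (S : Set M) ∪ lam m '' p.1.carrier,
            hcl p.1.carrier p.1.isClosed p.2⟩ : VClosed X), lam m p.2)) :=
  ⟨fun K hK x =>
      ((VClosed.finsetImage S fun s => lam s x).union
        (VClosed.image (lam m) (hcont m) ⟨K, hK⟩)).isClosed,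
    (VClosed.continuous_union.comp
      (((VClosed.continuous_finsetImage S hcont).comp continuous_snd).prodMk
        ((VClosed.continuous_image (hcont m)).comp continuous_fst))).prodMk
      ((hcont m).comp continuous_snd)⟩

/-- Continuity of the left-action components on the unary Schützenberger product
`◊X = V(X) × X` of a Boolean space `X`: for a left action of a monoid `M` on `X` with
continuous components, a finite `S ⊆ M` and `m ∈ M`, the set
`{λ_s(x) : s ∈ S} ∪ λ_m[K]` is closed for every closed `K` and every `x`, and the map
`(K, x) ↦ ({λ_s(x) : s ∈ S} ∪ λ_m[K], λ_m(x))` on `V(X) × X` is continuous. -/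
theorem stmt4 {X : Type*} [TopologicalSpace X] [CompactSpace X] [T2Space X]
    [TotallyDisconnectedSpace X]
    {M : Type*} [Monoid M] (lam : M → X → X)
    (hcont : ∀ m : M, Continuous (lam m))
    (hone : lam 1 = id)
    (hmul : ∀ m m' : M, lam (m * m') = lam m ∘ lam m')
    (S : Finset M) (m : M) :
    ∃ hcl : ∀ (K : Set X), IsClosed K → ∀ x : X,
        IsClosed ((fun s : M => lam s x) '' (S : Set M) ∪ lam m '' K),
      Continuous (fun p : VClosed X × X =>
        ((⟨(fun s : M => lam s p.2) '' (S : Set M) ∪ lam m '' p.1.carrier,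
            hcl p.1.carrier p.1.isClosed p.2⟩ : VClosed X), lam m p.2)) :=
  stmt4_general lam hcont S m
end

section
/- Let Σ be a type, M and N monoids, φ₁ : Σ* → M and φ₂ : Σ* → N monoid homomorphisms from the free monoid on Σ, and a ∈ Σ. For w ∈ Σ* define the finite set ζ_a(w) := {(φ₁(u), φ₂(v)) ∈ M × N : u, v ∈ Σ*, w = u·a·v}. Then the map Σ* → ◊(M,N) sending w to (ζ_a(w), φ₁(w), φ₂(w)) is a monoid homomorphism. -/
/-- The multiplication of the binary Schützenberger product `◊(M,N)` on
`Finset (M × N) × M × N`: `(S,m₁,n₁)·(T,m₂,n₂) = (m₁·T ∪ S·n₂, m₁·m₂, n₁·n₂)`. -/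
def dMul2 {M N : Type*} [Monoid M] [Monoid N] [DecidableEq M] [DecidableEq N]
    (p q : Finset (M × N) × M × N) : Finset (M × N) × M × N :=
  (q.1.image (fun t => (p.2.1 * t.1, t.2)) ∪ p.1.image (fun s => (s.1, s.2 * q.2.2)),
   p.2.1 * q.2.1, p.2.2 * q.2.2)

/-- The finite set `ζ_a(w) = {(φ₁(u), φ₂(v)) : w = u·a·v}`, realised as a `Finset` by
ranging over the (finitely many) positions at which `w` carries the letter `a`. -/
def zetaA {A M N : Type*} [Monoid M] [Monoid N] [DecidableEq A] [DecidableEq M]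
    [DecidableEq N] (φ₁ : FreeMonoid A →* M) (φ₂ : FreeMonoid A →* N) (a : A)
    (w : List A) : Finset (M × N) :=
  ((Finset.range w.length).filter fun i => w[i]? = some a).image
    fun i => (φ₁ (FreeMonoid.ofList (w.take i)), φ₂ (FreeMonoid.ofList (w.drop (i + 1))))

/-! In a factorization `v·w = u·a·u'` the marked letter lies either in `w` or in `v`; the two
cases give the two halves `φ₁(v)·ζ_a(w)` and `ζ_a(v)·φ₂(w)` of the product in `◊(M,N)`. -/

theorem List.append_eq_append_cons_iff {α : Type*} {v w u u' : List α} {a : α} :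
    v ++ w = u ++ a :: u' ↔
      (∃ s, u = v ++ s ∧ w = s ++ a :: u') ∨ ∃ t, v = u ++ a :: t ∧ u' = t ++ w := by
  rw [List.append_eq_append_iff]
  constructor
  · rintro (h | ⟨c, rfl, hc⟩)
    · exact .inl h
    · rcases List.cons_eq_append_iff.mp hc with ⟨rfl, rfl⟩ | ⟨t, rfl, rfl⟩
      · exact .inl ⟨[], by simp, rfl⟩
      · exact .inr ⟨t, rfl, rfl⟩
  · rintro (h | ⟨t, rfl, rfl⟩)
    · exact .inl h
    · exact .inr ⟨a :: t, rfl, rfl⟩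

theorem List.take_append_cons_drop_of_getElem?_eq_some {α : Type*} {w : List α} {i : ℕ}
    {a : α} (h : w[i]? = some a) : w.take i ++ a :: w.drop (i + 1) = w := by
  obtain ⟨hi, rfl⟩ := List.getElem?_eq_some_iff.mp h
  rw [List.getElem_cons_drop, List.take_append_drop]

section Zeta

variable {A M N : Type*} [Monoid M] [Monoid N] [DecidableEq A] [DecidableEq M] [DecidableEq N]
  (φ₁ : FreeMonoid A →* M) (φ₂ : FreeMonoid A →* N) (a : A)

theorem mem_zetaA {w : List A} {p : M × N} :
    p ∈ zetaA φ₁ φ₂ a w ↔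
      ∃ u v : List A, w = u ++ [a] ++ v ∧
        p = (φ₁ (FreeMonoid.ofList u), φ₂ (FreeMonoid.ofList v)) := by
  simp only [zetaA, Finset.mem_image, Finset.mem_filter, Finset.mem_range]
  constructor
  · rintro ⟨i, ⟨-, ha⟩, rfl⟩
    refine ⟨w.take i, w.drop (i + 1), ?_, rfl⟩
    simpa using (List.take_append_cons_drop_of_getElem?_eq_some ha).symm
  · rintro ⟨u, v, rfl, rfl⟩
    refine ⟨u.length, ⟨by simp, by simp⟩, ?_⟩
    simp [List.drop_append, List.drop_eq_nil_of_le]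

@[simp]
theorem zetaA_nil : zetaA φ₁ φ₂ a [] = ∅ := by
  simp [zetaA]

theorem zetaA_append (v w : List A) :
    zetaA φ₁ φ₂ a (v ++ w) =
      (zetaA φ₁ φ₂ a w).image (fun t => (φ₁ (FreeMonoid.ofList v) * t.1, t.2)) ∪
        (zetaA φ₁ φ₂ a v).image (fun s => (s.1, s.2 * φ₂ (FreeMonoid.ofList w))) := by
  ext p
  simp only [Finset.mem_union, Finset.mem_image, mem_zetaA, List.append_assoc,
    List.singleton_append]
  constructor
  · rintro ⟨u, u', h, rfl⟩
    rcases List.append_eq_append_cons_iff.mp h with ⟨s, rfl, rfl⟩ | ⟨t, rfl, rfl⟩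
    · exact .inl ⟨_, ⟨s, u', rfl, rfl⟩, by simp⟩
    · exact .inr ⟨_, ⟨u, t, rfl, rfl⟩, by simp⟩
  · rintro (⟨_, ⟨s, t, rfl, rfl⟩, rfl⟩ | ⟨_, ⟨s, t, rfl, rfl⟩, rfl⟩)
    · exact ⟨v ++ s, t, by simp, by simp⟩
    · exact ⟨s, t ++ w, by simp, by simp⟩

end Zeta

/-- `ζ_a(w)` is indeed the set of all `(φ₁(u), φ₂(v))` over factorizations `w = u·a·v`, and
the map `w ↦ (ζ_a(w), φ₁(w), φ₂(w))` is a monoid homomorphism `Σ* → ◊(M,N)`. -/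
theorem stmt7 {A M N : Type*} [Monoid M] [Monoid N] [DecidableEq A] [DecidableEq M]
    [DecidableEq N] (φ₁ : FreeMonoid A →* M) (φ₂ : FreeMonoid A →* N) (a : A) :
    (∀ (w : List A) (p : M × N),
      p ∈ zetaA φ₁ φ₂ a w ↔
        ∃ u v : List A, w = u ++ [a] ++ v ∧
          p = (φ₁ (FreeMonoid.ofList u), φ₂ (FreeMonoid.ofList v))) ∧
    ((zetaA φ₁ φ₂ a [], φ₁ (FreeMonoid.ofList []), φ₂ (FreeMonoid.ofList [])) =
      ((∅ : Finset (M × N)), 1, 1)) ∧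
    (∀ v w : List A,
      (zetaA φ₁ φ₂ a (v ++ w), φ₁ (FreeMonoid.ofList (v ++ w)),
        φ₂ (FreeMonoid.ofList (v ++ w))) =
      dMul2 (zetaA φ₁ φ₂ a v, φ₁ (FreeMonoid.ofList v), φ₂ (FreeMonoid.ofList v))
            (zetaA φ₁ φ₂ a w, φ₁ (FreeMonoid.ofList w), φ₂ (FreeMonoid.ofList w))) :=
  ⟨fun _ _ => mem_zetaA φ₁ φ₂ a, by simp [zetaA_nil, FreeMonoid.ofList_nil],
    fun v w => by simp [dMul2, zetaA_append, FreeMonoid.ofList_append]⟩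
end

section
/- Let Σ be a type, M and N monoids, and Φ : Σ* → ◊(M,N) a monoid homomorphism from the free monoid on Σ; write Φ(w) = (ζ(w), φ₁(w), φ₂(w)). Then for every word w ∈ Σ*, ζ(w) = ⋃ {φ₁(u)·ζ(a)·φ₂(v) : u, v ∈ Σ*, a ∈ Σ, w = u·a·v}, where φ₁(u)·T·φ₂(v) denotes the finite set {(φ₁(u)·m, n·φ₂(v)) : (m,n) ∈ T}. -/
/-! Induction on the word: `ζ(a·w) = φ₁(a)·ζ(w) ∪ ζ(a)·φ₂(w)`, and the factorizations
`a·w = u·b·v` split the same way, into the one with `u = ε` and those with `u = a·u'`. -/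

theorem List.iUnion_cons_eq_append_singleton_append {A X : Type*}
    (g : List A → A → List A → Set X) (a : A) (w : List A) :
    ⋃ (u : List A) (b : A) (v : List A) (_ : a :: w = u ++ [b] ++ v), g u b v =
      g [] a w ∪ ⋃ (u : List A) (b : A) (v : List A) (_ : w = u ++ [b] ++ v), g (a :: u) b v := by
  ext x
  simp only [Set.mem_iUnion, Set.mem_union, List.append_assoc, List.singleton_append,
    List.cons_eq_append_iff, exists_prop]
  constructor
  · rintro ⟨u, b, v, ⟨rfl, h⟩ | ⟨u', rfl, rfl⟩, hx⟩
    · obtain ⟨rfl, rfl⟩ := List.cons.inj h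
      exact Or.inl hx
    · exact Or.inr ⟨u', b, v, rfl, hx⟩
  · rintro (hx | ⟨u, b, v, rfl, hx⟩)
    · exact ⟨[], a, w, Or.inl ⟨rfl, rfl⟩, hx⟩
    · exact ⟨a :: u, b, v, Or.inr ⟨u, rfl, rfl⟩, hx⟩

theorem coe_fst_dMul2 {M N : Type*} [Monoid M] [Monoid N] [DecidableEq M] [DecidableEq N]
    (p q : Finset (M × N) × M × N) :
    ((dMul2 p q).1 : Set (M × N)) =
      (fun t : M × N => (p.2.1 * t.1, t.2)) '' q.1 ∪ (fun s : M × N => (s.1, s.2 * q.2.2)) '' p.1 := by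
  simp [dMul2]

/-- For any monoid homomorphism `Φ = (ζ, φ₁, φ₂) : Σ* → ◊(M,N)` and any word `w`,
`ζ(w) = ⋃ {φ₁(u)·ζ(a)·φ₂(v) : w = u·a·v}`. -/
theorem stmt9 {A M N : Type*} [Monoid M] [Monoid N] [DecidableEq M] [DecidableEq N]
    (Φ : List A → Finset (M × N) × M × N)
    (hone : Φ [] = (∅, 1, 1))
    (hmul : ∀ v w : List A, Φ (v ++ w) = dMul2 (Φ v) (Φ w)) :
    ∀ w : List A,
      ((Φ w).1 : Set (M × N)) =
        ⋃ (u : List A) (a : A) (v : List A) (_ : w = u ++ [a] ++ v),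
          (fun t : M × N => ((Φ u).2.1 * t.1, t.2 * (Φ v).2.2)) '' ((Φ [a]).1 : Set (M × N)) := by
  intro w
  induction w with
  | nil => simp [hone]
  | cons a w ih =>
    have hφ₁ : ∀ u, (Φ (a :: u)).2.1 = (Φ [a]).2.1 * (Φ u).2.1 := fun u => by
      rw [← List.singleton_append, hmul]; rfl
    rw [List.iUnion_cons_eq_append_singleton_append, ← List.singleton_append, hmul,
      coe_fst_dMul2, ih, Set.union_comm]
    simp only [Set.image_iUnion, Set.image_image, hone, one_mul]
    congr! 8 with u b v
    simp only [hφ₁ u, mul_assoc]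
end

section
/- Let Σ be a type, M and N monoids, Φ : Σ* → ◊(M,N) a monoid homomorphism with components Φ(w) = (ζ(w), φ₁(w), φ₂(w)), and let V₁ ⊆ M, V₂ ⊆ N. Then {w ∈ Σ* : ζ(w) ∩ (V₁ × V₂) ≠ ∅} = ⋃_{a ∈ Σ} ⋃_{(m,n) ∈ ζ(a)} A_m · a · B_n, where A_m := {u ∈ Σ* : φ₁(u)·m ∈ V₁}, B_n := {v ∈ Σ* : n·φ₂(v) ∈ V₂}, and A_m · a · B_n := {u·a·v : u ∈ A_m, v ∈ B_n}. -/
section SchutzenbergerProduct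

variable {A M N : Type*} [Monoid M] [Monoid N] [DecidableEq M] [DecidableEq N]

theorem mem_dMul2_fst {p q : Finset (M × N) × M × N} {t : M × N} :
    t ∈ (dMul2 p q).1 ↔
      (∃ s ∈ q.1, (p.2.1 * s.1, s.2) = t) ∨ ∃ s ∈ p.1, (s.1, s.2 * q.2.2) = t := by
  simp only [dMul2, Finset.mem_union, Finset.mem_image]

variable {Φ : List A → Finset (M × N) × M × N}

theorem mk_mem_fst_append_singleton_append
    (hmul : ∀ v w : List A, Φ (v ++ w) = dMul2 (Φ v) (Φ w))
    (u v : List A) {a : A} {mn : M × N} (hmn : mn ∈ (Φ [a]).1) :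
    ((Φ u).2.1 * mn.1, mn.2 * (Φ v).2.2) ∈ (Φ (u ++ [a] ++ v)).1 := by
  rw [List.append_assoc, hmul, hmul, mem_dMul2_fst]
  exact Or.inl ⟨_, mem_dMul2_fst.2 (Or.inr ⟨mn, hmn, rfl⟩), rfl⟩

theorem exists_append_singleton_append_of_mem_fst
    (hone : Φ [] = (∅, 1, 1))
    (hmul : ∀ v w : List A, Φ (v ++ w) = dMul2 (Φ v) (Φ w))
    {w : List A} {t : M × N} (ht : t ∈ (Φ w).1) :
    ∃ u a v, ∃ mn ∈ (Φ [a]).1,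
      w = u ++ [a] ++ v ∧ t = ((Φ u).2.1 * mn.1, mn.2 * (Φ v).2.2) := by
  induction w generalizing t with
  | nil => simp [hone] at ht
  | cons a w ih =>
    have hcons : ∀ x, Φ (a :: x) = dMul2 (Φ [a]) (Φ x) := hmul [a]
    rw [hcons, mem_dMul2_fst] at ht
    rcases ht with ⟨s, hs, rfl⟩ | ⟨s, hs, rfl⟩
    · obtain ⟨u, b, v, mn, hmn, rfl, rfl⟩ := ih hs
      refine ⟨a :: u, b, v, mn, hmn, rfl, ?_⟩
      rw [hcons u]
      simp only [dMul2, mul_assoc]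
    · exact ⟨[], a, w, s, hs, rfl, by simp [hone]⟩

end SchutzenbergerProduct

/-- For a monoid homomorphism `Φ = (ζ, φ₁, φ₂) : Σ* → ◊(M,N)` and `V₁ ⊆ M`, `V₂ ⊆ N`,
`{w : ζ(w) ∩ (V₁ × V₂) ≠ ∅} = ⋃_{a ∈ Σ} ⋃_{(m,n) ∈ ζ(a)} A_m · a · B_n`, where
`A_m = {u : φ₁(u)·m ∈ V₁}` and `B_n = {v : n·φ₂(v) ∈ V₂}`. -/
theorem stmt10 {A M N : Type*} [Monoid M] [Monoid N] [DecidableEq M] [DecidableEq N]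
    (Φ : List A → Finset (M × N) × M × N)
    (hone : Φ [] = (∅, 1, 1))
    (hmul : ∀ v w : List A, Φ (v ++ w) = dMul2 (Φ v) (Φ w))
    (V₁ : Set M) (V₂ : Set N) :
    {w : List A | ∃ t ∈ (Φ w).1, t.1 ∈ V₁ ∧ t.2 ∈ V₂} =
      ⋃ (a : A) (mn : M × N) (_ : mn ∈ (Φ [a]).1),
        {w : List A | ∃ u v : List A,
          (Φ u).2.1 * mn.1 ∈ V₁ ∧ mn.2 * (Φ v).2.2 ∈ V₂ ∧ w = u ++ [a] ++ v} := by
  ext w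
  simp only [Set.mem_ofPred_eq, Set.mem_iUnion]
  constructor
  · rintro ⟨t, ht, htV₁, htV₂⟩
    obtain ⟨u, a, v, mn, hmn, rfl, rfl⟩ := exists_append_singleton_append_of_mem_fst hone hmul ht
    exact ⟨a, mn, hmn, u, v, htV₁, htV₂, rfl⟩
  · rintro ⟨a, mn, hmn, u, v, hu, hv, rfl⟩
    exact ⟨_, mk_mem_fst_append_singleton_append hmul u v hmn, hu, hv⟩
end

section
/- Let Σ be a finite alphabet, B a Boolean subalgebra of P(Σ*) closed under quotients, and let B⊕2 denote the Boolean subalgebra of P(Σ*) generated by B together with all languages LaΣ* for L ∈ B and a ∈ Σ. Then every language K ∈ B⊕2 satisfies every ultrafilter equation in E(B⊕2): for every pair (μ, ν) ∈ E(B⊕2), K ∈ μ if and only if K ∈ ν. -/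
/-- `B ⊆ P(Σ*)` is a Boolean subalgebra: it contains the top element and is closed
under complements and finite unions. -/
def IsBoolSubalg {A : Type*} (B : Set (Set (List A))) : Prop :=
  Set.univ ∈ B ∧ (∀ L ∈ B, Lᶜ ∈ B) ∧ (∀ L ∈ B, ∀ L' ∈ B, L ∪ L' ∈ B)

/-- `B` is closed under left and right quotients by words. -/
def QuotClosed {A : Type*} (B : Set (Set (List A))) : Prop :=
  ∀ L ∈ B, ∀ w : List A,
    {u : List A | w ++ u ∈ L} ∈ B ∧ {u : List A | u ++ w ∈ L} ∈ B

/-- The sets belonging to the Boolean subalgebra of `P(α)` generated by `G`. -/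
inductive GenBA {α : Type*} (G : Set (Set α)) : Set α → Prop
  | base {s : Set α} : s ∈ G → GenBA G s
  | univ : GenBA G Set.univ
  | compl {s : Set α} : GenBA G s → GenBA G sᶜ
  | union {s t : Set α} : GenBA G s → GenBA G t → GenBA G (s ∪ t)

/-- The language `LaΣ* = {u·a·v : u ∈ L, v ∈ Σ*}`. -/
def LaStar {A : Type*} (L : Set (List A)) (a : A) : Set (List A) :=
  {x | ∃ u ∈ L, ∃ v : List A, x = u ++ [a] ++ v}

/-- `B ⊕ 2`: the Boolean subalgebra of `P(Σ*)` generated by `B` together with all the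
languages `LaΣ*` for `L ∈ B` and `a ∈ Σ`. -/
def BPlusTwo {A : Type*} (B : Set (Set (List A))) : Set (Set (List A)) :=
  {K | GenBA (B ∪ {S | ∃ L ∈ B, ∃ a : A, S = LaStar L a}) K}

/-- `Σ*⊗ℕ`: words with a marked position. -/
def WordPos (A : Type*) : Type _ := {p : List A × ℕ // p.2 < p.1.length}

/-- `f_a : Σ*⊗ℕ → Σ*` replaces the marked letter by `a`. -/
def fLetter {A : Type*} (a : A) (p : WordPos A) : List A := p.1.1.set p.1.2 a

/-- `f_r : Σ*⊗ℕ → Σ*` takes the prefix before the marked position. -/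
def fPrefix {A : Type*} (p : WordPos A) : List A := p.1.1.take p.1.2

/-- The set `E(B⊕2)` of ultrafilter equations. -/
def EqnSet {A : Type*} (B : Set (Set (List A))) :
    Set (Ultrafilter (List A) × Ultrafilter (List A)) :=
  {μν | (∀ L ∈ B, L ∈ μν.1 ↔ L ∈ μν.2) ∧
    (∀ (a : A) (γ : Ultrafilter (WordPos A)), μν.1 = γ.map (fLetter a) →
      ∃ δ : Ultrafilter (WordPos A), μν.2 = δ.map (fLetter a) ∧
        ∀ L ∈ B, L ∈ γ.map fPrefix ↔ L ∈ δ.map fPrefix) ∧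
    (∀ (a : A) (δ : Ultrafilter (WordPos A)), μν.2 = δ.map (fLetter a) →
      ∃ γ : Ultrafilter (WordPos A), μν.1 = γ.map (fLetter a) ∧
        ∀ L ∈ B, L ∈ γ.map fPrefix ↔ L ∈ δ.map fPrefix)}

/-! Satisfaction of an equation is preserved by Boolean combinations, so it suffices to treat
the generators. Languages of `B` are handled by condition (1). For `LaΣ*`, note that
`LaΣ* = f_a(f_r⁻¹ L)`: an ultrafilter `μ ∋ LaΣ*` lifts along `f_a` to some `γ ∋ f_r⁻¹ L`,
condition (2) transfers `L ∈ γ.map f_r` to a lift `δ` of `ν`, and then `ν` contains the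
image `f_a(f_r⁻¹ L) = LaΣ*`. -/

theorem GenBA.mem_ultrafilter_iff {α : Type*} {G : Set (Set α)} {μ ν : Ultrafilter α}
    (hG : ∀ s ∈ G, s ∈ μ ↔ s ∈ ν) {K : Set α} (hK : GenBA G K) : K ∈ μ ↔ K ∈ ν := by
  induction hK with
  | base hs => exact hG _ hs
  | univ => exact iff_of_true Filter.univ_mem Filter.univ_mem
  | compl _ ih => simp only [Ultrafilter.compl_mem_iff_notMem, ih]
  | union _ _ ih₁ ih₂ => simp only [Ultrafilter.union_mem_iff, ih₁, ih₂]

theorem fLetter_image_preimage_fPrefix {A : Type*} (L : Set (List A)) (a : A) :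
    fLetter a '' (fPrefix ⁻¹' L) = LaStar L a := by
  ext x
  constructor
  · rintro ⟨⟨⟨w, i⟩, hi⟩, hL, rfl⟩
    refine ⟨w.take i, hL, w.drop (i + 1), ?_⟩
    simp [fLetter, List.set_eq_take_append_cons_drop, hi]
  · rintro ⟨u, hu, v, rfl⟩
    refine ⟨⟨(u ++ [a] ++ v, u.length), by simp⟩, ?_, ?_⟩
    · show (u ++ [a] ++ v).take u.length ∈ L
      simpa using hu
    · simp [fLetter]

theorem laStar_mem_of_lift {A : Type*} {L : Set (List A)} {a : A} {μ ν : Ultrafilter (List A)}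
    (hlift : ∀ γ : Ultrafilter (WordPos A), μ = γ.map (fLetter a) →
      ∃ δ : Ultrafilter (WordPos A), ν = δ.map (fLetter a) ∧
        (L ∈ γ.map fPrefix → L ∈ δ.map fPrefix))
    (hμ : LaStar L a ∈ μ) : LaStar L a ∈ ν := by
  rw [← fLetter_image_preimage_fPrefix] at hμ ⊢
  obtain ⟨δ, rfl, hδ⟩ := hlift _ (Ultrafilter.ofComapInfPrincipal_eq_of_map hμ).symm
  exact Filter.image_mem_map (hδ (Ultrafilter.ofComapInfPrincipal_mem hμ))

theorem stmt11_general {A : Type*} (B : Set (Set (List A))) :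
    ∀ K ∈ BPlusTwo B, ∀ μν ∈ EqnSet B, (K ∈ μν.1 ↔ K ∈ μν.2) := by
  rintro K hK ⟨μ, ν⟩ ⟨hagree, hμν, hνμ⟩
  refine GenBA.mem_ultrafilter_iff ?_ hK
  rintro _ (hL | ⟨L, hL, a, rfl⟩)
  · exact hagree _ hL
  · constructor
    · refine laStar_mem_of_lift fun γ hγ => ?_
      obtain ⟨δ, hδ, hiff⟩ := hμν a γ hγ
      exact ⟨δ, hδ, (hiff L hL).mp⟩
    · refine laStar_mem_of_lift fun δ hδ => ?_
      obtain ⟨γ, hγ, hiff⟩ := hνμ a δ hδ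
      exact ⟨γ, hγ, (hiff L hL).mpr⟩

/-- Soundness: every language in `B⊕2` satisfies every ultrafilter equation in `E(B⊕2)`. -/
theorem stmt11 {A : Type*} [Fintype A] (B : Set (Set (List A)))
    (hB : IsBoolSubalg B) (hq : QuotClosed B) :
    ∀ K ∈ BPlusTwo B, ∀ μν ∈ EqnSet B, (K ∈ μν.1 ↔ K ∈ μν.2) :=
  stmt11_general B
end

section
/- Let Σ be a type, M a monoid, and Φ : Σ* → ◊M a monoid homomorphism from the free monoid on Σ; write Φ(w) = (σ(w), h(w)). Then for every word w = w₀⋯w_{|w|−1} ∈ Σ*, σ(w) = ⋃_{0 ≤ i < |w|} h(w₀⋯w_{i−1}) · σ(w_i) · h(w_{i+1}⋯w_{|w|−1}), where for m, m' ∈ M and a finite set T ⊆ M, m·T·m' := {m·t·m' : t ∈ T}. -/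
theorem coe_fst_dMul {M : Type*} [Monoid M] [DecidableEq M] (p q : Finset M × M) :
    ((dMul p q).1 : Set M) = (· * q.2) '' p.1 ∪ (p.2 * ·) '' q.1 := by
  simp [dMul]

section

variable {A M : Type*} [Monoid M] [DecidableEq M] {Φ : List A → Finset M × M}

theorem snd_cons (hmul : ∀ v w : List A, Φ (v ++ w) = dMul (Φ v) (Φ w)) (a : A) (w : List A) :
    (Φ (a :: w)).2 = (Φ [a]).2 * (Φ w).2 := by
  rw [← List.singleton_append, hmul]; rfl

theorem coe_fst_cons (hmul : ∀ v w : List A, Φ (v ++ w) = dMul (Φ v) (Φ w)) (a : A)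
    (w : List A) :
    ((Φ (a :: w)).1 : Set M) = (· * (Φ w).2) '' (Φ [a]).1 ∪ ((Φ [a]).2 * ·) '' (Φ w).1 := by
  rw [← List.singleton_append, hmul, coe_fst_dMul]

end

/-- For a monoid homomorphism `Φ = (σ, h) : Σ* → ◊M` and a word `w`,
`σ(w) = ⋃_{i < |w|} h(w₀⋯w_{i−1}) · σ(w_i) · h(w_{i+1}⋯w_{|w|−1})`. -/
theorem stmt13 {A M : Type*} [Monoid M] [DecidableEq M]
    (Φ : List A → Finset M × M)
    (hone : Φ [] = (∅, 1))
    (hmul : ∀ v w : List A, Φ (v ++ w) = dMul (Φ v) (Φ w)) :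
    ∀ w : List A,
      ((Φ w).1 : Set M) =
        ⋃ i : Fin w.length,
          (fun t => (Φ (w.take i)).2 * t * (Φ (w.drop (i + 1))).2) ''
            ((Φ [w.get i]).1 : Set M) := by
  intro w
  induction w with
  | nil => simp [hone]
  | cons a w ih =>
    rw [coe_fst_cons hmul, ih, Set.image_iUnion]
    refine .trans ?_ (Set.iUnion_fin_add_one_eq_iUnion_succ (n := w.length) _).symm
    congr 1
    · simp [hone]
    · refine Set.iUnion_congr fun i => ?_
      simp only [Set.image_image, Function.comp_apply, Fin.val_succ, List.take_succ_cons,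
        List.drop_succ_cons, snd_cons hmul a (w.take i), mul_assoc]
      rfl
end

section
/- Let Σ be a finite alphabet, M a monoid, and Φ : Σ* → ◊M a monoid homomorphism with components Φ(w) = (σ(w), h(w)), such that σ(a) is nonempty for every letter a ∈ Σ. Let V ⊆ M. For each function m : Σ → M with m(a) ∈ σ(a) for all a ∈ Σ, let τ_m : (Σ × {0,1})* → M be the monoid homomorphism determined on generators by τ_m(a,0) = h(a) and τ_m(a,1) = m(a). Then {w ∈ Σ* : σ(w) ∩ V ≠ ∅} = ⋃_m {w ∈ Σ* : there exists i < |w| with τ_m(w^{(i)}) ∈ V}, the union being over all such functions m. -/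
section Marked

variable {A : Type*}

theorem marked_cons_zero (a : A) (w : List A) :
    marked (a :: w) 0 = FreeMonoid.of (a, true) * FreeMonoid.ofList (w.map (·, false)) := by
  simp only [marked, List.mapIdx_cons, FreeMonoid.ofList_cons, decide_true, Nat.add_one_ne_zero,
    decide_false]
  congr 2
  exact List.ext_getElem (by simp) (by simp)

theorem marked_cons_succ (a : A) (w : List A) (i : ℕ) :
    marked (a :: w) (i + 1) = FreeMonoid.of (a, false) * marked w i := by
  simp [marked, List.mapIdx_cons, FreeMonoid.ofList_cons]

theorem lift_marked {M : Type*} [Monoid M] (f : A × Bool → M) (w : List A) {i : ℕ}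
    (hi : i < w.length) :
    FreeMonoid.lift f (marked w i) =
      ((w.take i).map fun a => f (a, false)).prod * f (w[i], true) *
        ((w.drop (i + 1)).map fun a => f (a, false)).prod := by
  induction w generalizing i with
  | nil => simp at hi
  | cons a w ih =>
    cases i with
    | zero => simp [marked_cons_zero, Function.comp_def]
    | succ i =>
      simp [marked_cons_succ, ih (Nat.lt_of_succ_lt_succ hi), mul_assoc]

end Marked

theorem exists_choice_apply_eq {α β : Type*} {S : α → Finset β} (hne : ∀ a, (S a).Nonempty)
    {a : α} {s : β} (hs : s ∈ S a) : ∃ m : α → β, m a = s ∧ ∀ b, m b ∈ S b := by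
  classical
  refine ⟨Function.update (fun b => (hne b).choose) a s, Function.update_self .., fun b => ?_⟩
  rcases eq_or_ne b a with rfl | hb
  · rwa [Function.update_self]
  · rw [Function.update_of_ne hb]
    exact (hne b).choose_spec

section Schutzenberger

variable {A M : Type*} [Monoid M] [DecidableEq M] {Φ : List A → Finset M × M}

theorem snd_eq_prod (hone : Φ [] = (∅, 1)) (hmul : ∀ v w : List A, Φ (v ++ w) = dMul (Φ v) (Φ w))
    (w : List A) : (Φ w).2 = (w.map fun a => (Φ [a]).2).prod := by
  induction w with
  | nil => simp [hone]
  | cons a w ih => rw [List.map_cons, List.prod_cons, ← ih, snd_cons hmul]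

theorem fst_cons (hmul : ∀ v w : List A, Φ (v ++ w) = dMul (Φ v) (Φ w)) (a : A) (w : List A) :
    (Φ (a :: w)).1 = (Φ [a]).1.image (· * (Φ w).2) ∪ (Φ w).1.image ((Φ [a]).2 * ·) := by
  rw [← List.singleton_append, hmul]; rfl

theorem mem_fst_iff (hone : Φ [] = (∅, 1)) (hmul : ∀ v w : List A, Φ (v ++ w) = dMul (Φ v) (Φ w))
    (w : List A) (t : M) :
    t ∈ (Φ w).1 ↔ ∃ i, ∃ hi : i < w.length, ∃ s ∈ (Φ [w[i]]).1,
      t = (Φ (w.take i)).2 * s * (Φ (w.drop (i + 1))).2 := by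
  induction w generalizing t with
  | nil => simp [hone]
  | cons a w ih =>
    have snd_nil : (Φ []).2 = 1 := by rw [hone]
    have prepend (i : ℕ) (s : M) :
        (Φ [a]).2 * ((Φ (w.take i)).2 * s * (Φ (w.drop (i + 1))).2) =
          (Φ ((a :: w).take (i + 1))).2 * s * (Φ ((a :: w).drop (i + 1 + 1))).2 := by
      rw [List.take_succ_cons, List.drop_succ_cons, snd_cons hmul a (w.take i)]
      simp only [mul_assoc]
    rw [fst_cons hmul, Finset.mem_union, Finset.mem_image, Finset.mem_image]
    constructor
    · rintro (⟨s, hs, rfl⟩ | ⟨t, ht, rfl⟩)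
      · exact ⟨0, by simp, s, hs, by simp [snd_nil]⟩
      · obtain ⟨i, hi, s, hs, rfl⟩ := (ih t).1 ht
        exact ⟨i + 1, by simpa, s, hs, prepend i s⟩
    · rintro ⟨_ | i, hi, s, hs, rfl⟩
      · exact Or.inl ⟨s, hs, by simp [snd_nil]⟩
      · exact Or.inr ⟨_, (ih _).2 ⟨i, by simpa using hi, s, hs, rfl⟩, prepend i s⟩

theorem lift_marked_eq_snd_mul (hone : Φ [] = (∅, 1))
    (hmul : ∀ v w : List A, Φ (v ++ w) = dMul (Φ v) (Φ w)) (m : A → M) (w : List A) {i : ℕ}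
    (hi : i < w.length) :
    FreeMonoid.lift (fun c : A × Bool => if c.2 then m c.1 else (Φ [c.1]).2) (marked w i) =
      (Φ (w.take i)).2 * m w[i] * (Φ (w.drop (i + 1))).2 := by
  simp only [lift_marked _ _ hi, Bool.false_eq_true, if_false, if_true, ← snd_eq_prod hone hmul]

end Schutzenberger

theorem stmt14_general {A M : Type*} [Monoid M] [DecidableEq M]
    (Φ : List A → Finset M × M)
    (hone : Φ [] = (∅, 1))
    (hmul : ∀ v w : List A, Φ (v ++ w) = dMul (Φ v) (Φ w))
    (hne : ∀ a : A, (Φ [a]).1.Nonempty)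
    (V : Set M) :
    {w : List A | ∃ t ∈ (Φ w).1, t ∈ V} =
      ⋃ (m : A → M) (_ : ∀ a : A, m a ∈ (Φ [a]).1),
        {w : List A | ∃ i < w.length,
          (FreeMonoid.lift fun c : A × Bool => if c.2 then m c.1 else (Φ [c.1]).2)
            (marked w i) ∈ V} := by
  ext w
  simp only [Set.mem_ofPred_eq, Set.mem_iUnion]
  constructor
  · rintro ⟨t, ht, htV⟩
    obtain ⟨i, hi, s, hs, rfl⟩ := (mem_fst_iff hone hmul w t).1 ht
    obtain ⟨m, hm_at, hm⟩ := exists_choice_apply_eq hne hs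
    exact ⟨m, hm, i, hi, by rwa [lift_marked_eq_snd_mul hone hmul m w hi, hm_at]⟩
  · rintro ⟨m, hm, i, hi, hτ⟩
    rw [lift_marked_eq_snd_mul hone hmul m w hi] at hτ
    exact ⟨_, (mem_fst_iff hone hmul w _).2 ⟨i, hi, m w[i], hm _, rfl⟩, hτ⟩

/-- Let `Φ = (σ, h) : Σ* → ◊M` be a monoid homomorphism with `σ(a) ≠ ∅` for every letter
`a`, and `V ⊆ M`. For each choice function `m : Σ → M` with `m(a) ∈ σ(a)`, let `τ_m` be
the homomorphism `(Σ×2)* → M` sending `(a,0) ↦ h(a)` and `(a,1) ↦ m(a)`. Then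
`{w : σ(w) ∩ V ≠ ∅} = ⋃_m {w : ∃ i < |w|, τ_m(w^{(i)}) ∈ V}`. -/
theorem stmt14 {A M : Type*} [Fintype A] [Monoid M] [DecidableEq M]
    (Φ : List A → Finset M × M)
    (hone : Φ [] = (∅, 1))
    (hmul : ∀ v w : List A, Φ (v ++ w) = dMul (Φ v) (Φ w))
    (hne : ∀ a : A, (Φ [a]).1.Nonempty)
    (V : Set M) :
    {w : List A | ∃ t ∈ (Φ w).1, t ∈ V} =
      ⋃ (m : A → M) (_ : ∀ a : A, m a ∈ (Φ [a]).1),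
        {w : List A | ∃ i < w.length,
          (FreeMonoid.lift fun c : A × Bool => if c.2 then m c.1 else (Φ [c.1]).2)
            (marked w i) ∈ V} :=
  stmt14_general Φ hone hmul hne V
end

section
/- Let Σ be a type and a ∈ Σ. Let Σ*⊗ℕ denote the set of pairs (w,i) with w ∈ Σ* and i < |w|, f_a : Σ*⊗ℕ → Σ* the map sending (w,i) to the word obtained from w by replacing its i-th letter by a, and f_r : Σ*⊗ℕ → Σ* the map sending (w,i) to the prefix w₀⋯w_{i−1}. Let F be a proper filter of subsets of Σ* (a nonempty collection of subsets, upward closed, closed under finite intersections, and not containing the empty set), and let μ be an ultrafilter on Σ*. If LaΣ* ∈ μ for every L ∈ F, then there exists an ultrafilter γ on Σ*⊗ℕ such that μ = γ.map f_a and F ⊆ γ.map f_r. -/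
/-! A word `u·a·v` is its own `f_a`-image when marked at position `|u|`, and its `f_r`-image
there is `u`; so `LaΣ* = f_a(f_r⁻¹ L)`. The hypothesis thus says that every `μ`-large set meets
`f_a(f_r⁻¹ L)` for every `L ∈ F`, i.e. that `f_a⁻¹ μ` and `f_r⁻¹ F` generate a proper filter on
`Σ*⊗ℕ`. Any ultrafilter `γ` refining it works: `βf_a(γ)` is an ultrafilter finer than `μ`, hence
equal to it. -/

theorem Ultrafilter.exists_map_eq_and_le_map {α β γ : Type*} (μ : Ultrafilter β) (G : Filter γ)
    (f : α → β) (g : α → γ) (h : ∀ L ∈ G, f '' (g ⁻¹' L) ∈ μ) :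
    ∃ U : Ultrafilter α, U.map f = μ ∧ ↑(U.map g) ≤ G := by
  let Φ := Filter.comap f μ ⊓ Filter.comap g G
  have : Φ.NeBot := by
    refine Filter.inf_neBot_iff.2 fun s ⟨M, hM, hMs⟩ t ⟨L, hL, hLt⟩ => ?_
    obtain ⟨_, hxM, x, hxL, rfl⟩ := μ.nonempty_of_mem (Filter.inter_mem hM (h L hL))
    exact ⟨x, hMs hxM, hLt hxL⟩
  refine ⟨.of Φ, Ultrafilter.coe_le_coe.1 ?_, ?_⟩
  · exact Filter.map_le_iff_le_comap.2 ((Ultrafilter.of_le Φ).trans inf_le_left)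
  · exact Filter.map_le_iff_le_comap.2 ((Ultrafilter.of_le Φ).trans inf_le_right)

theorem laStar_eq_image_fLetter_preimage_fPrefix {A : Type*} (L : Set (List A)) (a : A) :
    LaStar L a = fLetter a '' (fPrefix ⁻¹' L) := by
  ext x
  constructor
  · rintro ⟨u, hu, v, rfl⟩
    refine ⟨⟨(u ++ [a] ++ v, u.length), by simp⟩, ?_, by simp [fLetter]⟩
    show (u ++ [a] ++ v).take u.length ∈ L
    simpa using hu
  · rintro ⟨⟨⟨w, i⟩, hi⟩, hw, rfl⟩
    refine ⟨w.take i, hw, w.drop (i + 1), ?_⟩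
    simp [fLetter, List.set_eq_take_append_cons_drop, hi]

theorem stmt17_general {A : Type*} (a : A) (F : Set (Set (List A)))
    (hne : F.Nonempty)
    (hup : ∀ L ∈ F, ∀ L' : Set (List A), L ⊆ L' → L' ∈ F)
    (hinter : ∀ L ∈ F, ∀ L' ∈ F, L ∩ L' ∈ F)
    (μ : Ultrafilter (List A))
    (h : ∀ L ∈ F, LaStar L a ∈ μ) :
    ∃ γ : Ultrafilter (WordPos A),
      μ = γ.map (fLetter a) ∧ ∀ L ∈ F, L ∈ γ.map fPrefix := by
  obtain ⟨L₀, hL₀⟩ := hne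
  let G : Filter (List A) :=
    { sets := F
      univ_sets := hup L₀ hL₀ _ (Set.subset_univ _)
      sets_of_superset := fun hs hst => hup _ hs _ hst
      inter_sets := fun hs ht => hinter _ hs _ ht }
  obtain ⟨γ, hμ, hG⟩ := μ.exists_map_eq_and_le_map G (fLetter a) fPrefix fun L hL => by
    simpa only [← laStar_eq_image_fLetter_preimage_fPrefix] using h L hL
  exact ⟨γ, hμ.symm, fun L hL => hG hL⟩

/-- If `F` is a proper filter of subsets of `Σ*` and `LaΣ* ∈ μ` for every `L ∈ F`, then
there is an ultrafilter `γ` on `Σ*⊗ℕ` with `μ = βf_a(γ)` and `F ⊆ βf_r(γ)`. -/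
theorem stmt17 {A : Type*} (a : A) (F : Set (Set (List A)))
    (hne : F.Nonempty)
    (hup : ∀ L ∈ F, ∀ L' : Set (List A), L ⊆ L' → L' ∈ F)
    (hinter : ∀ L ∈ F, ∀ L' ∈ F, L ∩ L' ∈ F)
    (hproper : ∅ ∉ F)
    (μ : Ultrafilter (List A))
    (h : ∀ L ∈ F, LaStar L a ∈ μ) :
    ∃ γ : Ultrafilter (WordPos A),
      μ = γ.map (fLetter a) ∧ ∀ L ∈ F, L ∈ γ.map fPrefix :=
  stmt17_general a F hne hup hinter μ h
end

section
/- Let Σ be a finite alphabet and B a Boolean subalgebra of P(Σ*) closed under quotients, and let B⊕2 denote the Boolean subalgebra of P(Σ*) generated by B together with all languages LaΣ* for L ∈ B and a ∈ Σ. Then for any language K ⊆ Σ*: K ∈ B⊕2 if and only if K satisfies every ultrafilter equation in E(B⊕2), i.e., for every pair (μ, ν) ∈ E(B⊕2), K ∈ μ ⟺ K ∈ ν. -/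
/-!
Soundness: the sets on which two ultrafilters agree form a Boolean subalgebra, and an equation
of `E(B⊕2)` makes `μ` and `ν` agree on the generators `LaΣ*`, because `LaΣ* ∈ μ` exactly when
`μ = γ.map f_a` for some `γ` with `L ∈ γ.map f_r`.

Completeness: by compactness of the Stone space, a language respected by every pair of
ultrafilters agreeing on a Boolean subalgebra `C` lies in `C`. And two ultrafilters agreeing on
`B⊕2` form an equation: a witness `γ` for `μ` lifts to a witness `δ` for `ν`, since
`L ∈ γ.map f_r` puts `LaΣ*` in `μ`, hence in `ν`.
-/

open Filter Set

namespace Ultrafilter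

variable {X : Type*}

def equalizer (μ ν : Ultrafilter X) : BooleanSubalgebra (Set X) where
  carrier := {s | s ∈ μ ↔ s ∈ ν}
  supClosed' s hs t ht := show s ∪ t ∈ μ ↔ s ∪ t ∈ ν by
    rw [union_mem_iff, union_mem_iff, hs.out, ht.out]
  infClosed' s hs t ht := show s ∩ t ∈ μ ↔ s ∩ t ∈ ν from
    inter_mem_iff.trans ((and_congr hs.out ht.out).trans inter_mem_iff.symm)
  compl_mem' {s} hs := show sᶜ ∈ μ ↔ sᶜ ∈ ν by
    rw [compl_mem_iff_notMem, compl_mem_iff_notMem, hs.out]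
  bot_mem' := iff_of_false μ.empty_notMem ν.empty_notMem

@[simp]
lemma mem_equalizer {μ ν : Ultrafilter X} {s : Set X} : s ∈ equalizer μ ν ↔ (s ∈ μ ↔ s ∈ ν) := by
  rfl

lemma equalizer_comm (μ ν : Ultrafilter X) : equalizer μ ν = equalizer ν μ :=
  BooleanSubalgebra.ext fun _ => by simp only [mem_equalizer, Iff.comm]

lemma le_equalizer_of_forall_mem_imp {C : BooleanSubalgebra (Set X)} {μ ν : Ultrafilter X}
    (h : ∀ L ∈ C, L ∈ μ → L ∈ ν) : C ≤ equalizer μ ν := fun L hL =>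
  mem_equalizer.2 ⟨h L hL, fun hLν => by_contra fun hLμ =>
    compl_mem_iff_notMem.1 (h Lᶜ (C.compl_mem hL) (compl_mem_iff_notMem.2 hLμ)) hLν⟩

/-- This is compactness of the Stone space `Ultrafilter X`. -/
lemma exists_subset_of_forall_mem {S : Set (Set X)} (hne : S.Nonempty)
    (hdir : DirectedOn (· ⊇ ·) S) {K : Set X} (h : ∀ ν : Ultrafilter X, (∀ L ∈ S, L ∈ ν) → K ∈ ν) :
    ∃ L ∈ S, L ⊆ K := by
  have hK : K ∈ ⨅ L ∈ S, 𝓟 L := mem_iff_ultrafilter.2 fun ν hν =>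
    h ν fun L hL => le_principal_iff.1 (hν.trans (biInf_le _ hL))
  have hdir' : DirectedOn (𝓟 ⁻¹'o (· ≥ ·)) S := hdir.mono fun _ _ h => principal_mono.2 h
  simpa only [mem_principal] using (mem_biInf_of_directed hdir' hne).1 hK

end Ultrafilter

open Ultrafilter in
lemma BooleanSubalgebra.mem_of_forall_le_equalizer {X : Type*} {C : BooleanSubalgebra (Set X)}
    {K : Set X} (h : ∀ μ ν : Ultrafilter X, C ≤ equalizer μ ν → K ∈ μ → K ∈ ν) : K ∈ C := by
  have local_basis : ∀ μ : Ultrafilter X, K ∈ μ → ∃ L ∈ C, L ∈ μ ∧ L ⊆ K := fun μ hK => by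
    obtain ⟨L, ⟨hLC, hLμ⟩, hLK⟩ := exists_subset_of_forall_mem (S := {L | L ∈ C ∧ L ∈ μ})
      ⟨univ, C.top_mem, univ_mem⟩
      (fun L hL L' hL' => ⟨L ∩ L', ⟨C.inf_mem hL.1 hL'.1, inter_mem hL.2 hL'.2⟩,
        inter_subset_left, inter_subset_right⟩)
      (fun ν hν => h μ ν (le_equalizer_of_forall_mem_imp fun L hL hLμ => hν L ⟨hL, hLμ⟩) hK)
    exact ⟨L, hLC, hLμ, hLK⟩
  obtain ⟨M, ⟨hMC, hMK⟩, hM⟩ := exists_subset_of_forall_mem (S := {M | M ∈ C ∧ Mᶜ ⊆ K})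
    ⟨univ, C.top_mem, by simp⟩
    (fun M hM M' hM' => ⟨M ∩ M', ⟨C.inf_mem hM.1 hM'.1, by
      rw [compl_inter]; exact union_subset hM.2 hM'.2⟩, inter_subset_left, inter_subset_right⟩)
    (K := Kᶜ) (fun ν hν => compl_mem_iff_notMem.2 fun hK => by
      obtain ⟨L, hLC, hLν, hLK⟩ := local_basis ν hK
      exact compl_mem_iff_notMem.1 (hν Lᶜ ⟨C.compl_mem hLC, by rwa [compl_compl]⟩) hLν)
  rw [show K = Mᶜ from (subset_compl_comm.1 hM).antisymm hMK]
  exact C.compl_mem hMC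

lemma genBA_iff_mem_closure {α : Type*} {G : Set (Set α)} {s : Set α} :
    GenBA G s ↔ s ∈ BooleanSubalgebra.closure G := by
  constructor
  · intro hs
    induction hs with
    | base hs => exact BooleanSubalgebra.subset_closure hs
    | univ => exact BooleanSubalgebra.top_mem
    | compl _ ih => exact BooleanSubalgebra.compl_mem ih
    | union _ _ ih ih' => exact BooleanSubalgebra.sup_mem ih ih'
  · intro hs
    induction hs using BooleanSubalgebra.closure_bot_sup_induction with
    | mem s hs => exact .base hs
    | bot => simpa using GenBA.compl (G := G) .univ
    | sup s _ t _ ihs iht => exact .union ihs iht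
    | compl s _ ih => exact .compl ih

section Words

variable {A : Type*}

def IsBoolSubalg.toBooleanSubalgebra {B : Set (Set (List A))} (hB : IsBoolSubalg B) :
    BooleanSubalgebra (Set (List A)) where
  carrier := B
  supClosed' L hL L' hL' := hB.2.2 L hL L' hL'
  infClosed' L hL L' hL' := by
    have h := hB.2.1 _ (hB.2.2 _ (hB.2.1 L hL) _ (hB.2.1 L' hL'))
    rwa [compl_union, compl_compl, compl_compl] at h
  compl_mem' {L} hL := hB.2.1 L hL
  bot_mem' := by simpa using hB.2.1 _ hB.1

def plusTwoGenerators (B : Set (Set (List A))) : Set (Set (List A)) :=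
  B ∪ {S | ∃ L ∈ B, ∃ a : A, S = LaStar L a}

lemma mem_bPlusTwo_iff {B : Set (Set (List A))} {K : Set (List A)} :
    K ∈ BPlusTwo B ↔ K ∈ BooleanSubalgebra.closure (plusTwoGenerators B) :=
  genBA_iff_mem_closure

def WordPos.ofSplit (u : List A) (a : A) (v : List A) : WordPos A :=
  ⟨(u ++ [a] ++ v, u.length), by simp⟩

lemma fLetter_ofSplit (u : List A) (a : A) (v : List A) :
    fLetter a (WordPos.ofSplit u a v) = u ++ [a] ++ v := by
  simp [fLetter, WordPos.ofSplit]

lemma fPrefix_ofSplit (u : List A) (a : A) (v : List A) :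
    fPrefix (WordPos.ofSplit u a v) = u := by
  simp [fPrefix, WordPos.ofSplit]

lemma image_fLetter_preimage_fPrefix (L : Set (List A)) (a : A) :
    fLetter a '' (fPrefix ⁻¹' L) = LaStar L a := by
  ext x
  constructor
  · rintro ⟨⟨⟨w, i⟩, hi⟩, hp, rfl⟩
    refine ⟨w.take i, hp, w.drop (i + 1), ?_⟩
    simp [fLetter, List.set_eq_take_cons_drop a hi]
  · rintro ⟨u, hu, v, rfl⟩
    exact ⟨WordPos.ofSplit u a v, by rwa [mem_preimage, fPrefix_ofSplit], fLetter_ofSplit u a v⟩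

lemma laStar_mem_map_fLetter {L : Set (List A)} {a : A} {γ : Ultrafilter (WordPos A)}
    (hL : L ∈ γ.map fPrefix) : LaStar L a ∈ γ.map (fLetter a) := by
  rw [Ultrafilter.mem_map, ← image_fLetter_preimage_fPrefix]
  exact mem_of_superset hL (subset_preimage_image _ _)

lemma exists_map_fLetter_eq_of_laStar_mem {L : Set (List A)} {a : A} {μ : Ultrafilter (List A)}
    (h : LaStar L a ∈ μ) :
    ∃ γ : Ultrafilter (WordPos A), μ = γ.map (fLetter a) ∧ L ∈ γ.map fPrefix := by
  rw [← image_fLetter_preimage_fPrefix] at h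
  exact ⟨.ofComapInfPrincipal h, (Ultrafilter.ofComapInfPrincipal_eq_of_map h).symm,
    Ultrafilter.ofComapInfPrincipal_mem h⟩

/-- `δ` refines `f_a⁻¹ ν` together with all `f_r⁻¹ L`, `L ∈ C ∩ γ.map f_r`: a directed family
whose members are nontrivial because `f_a '' f_r⁻¹ L = LaΣ* ∈ ν`. -/
lemma exists_map_fLetter_eq_of_forall_laStar_mem (C : BooleanSubalgebra (Set (List A)))
    {a : A} {γ : Ultrafilter (WordPos A)} {ν : Ultrafilter (List A)}
    (h : ∀ L ∈ C, L ∈ γ.map fPrefix → LaStar L a ∈ ν) :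
    ∃ δ : Ultrafilter (WordPos A), ν = δ.map (fLetter a) ∧
      C ≤ Ultrafilter.equalizer (γ.map fPrefix) (δ.map fPrefix) := by
  let S := {L // L ∈ C ∧ L ∈ γ.map fPrefix}
  let F : S → Filter (WordPos A) := fun L => comap (fLetter a) ν ⊓ 𝓟 (fPrefix ⁻¹' L.1)
  let top : S := ⟨univ, C.top_mem, univ_mem⟩
  have : Nonempty S := ⟨top⟩
  have hdir : Directed (· ≥ ·) F := fun L L' =>
    ⟨⟨L.1 ∩ L'.1, C.inf_mem L.2.1 L'.2.1, inter_mem L.2.2 L'.2.2⟩,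
      inf_le_inf_left _ (principal_mono.2 (preimage_mono inter_subset_left)),
      inf_le_inf_left _ (principal_mono.2 (preimage_mono inter_subset_right))⟩
  have : (⨅ L, F L).NeBot := iInf_neBot_of_directed' hdir fun L =>
    Ultrafilter.comap_inf_principal_neBot_of_image_mem
      (by rw [image_fLetter_preimage_fPrefix]; exact h L.1 L.2.1 L.2.2)
  let δ := Ultrafilter.of (⨅ L, F L)
  have hδ (L : S) : ↑δ ≤ F L := (Ultrafilter.of_le _).trans (iInf_le _ L)
  refine ⟨δ, (Ultrafilter.eq_of_le ?_).symm, Ultrafilter.le_equalizer_of_forall_mem_imp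
    fun L hL hLγ =>
      Ultrafilter.mem_map.2 (le_principal_iff.1 ((hδ ⟨L, hL, hLγ⟩).trans inf_le_right))⟩
  rw [Ultrafilter.coe_map]
  exact map_le_iff_le_comap.2 ((hδ top).trans inf_le_left)

lemma closure_le_equalizer_of_mem_eqnSet {B : Set (Set (List A))} {μ ν : Ultrafilter (List A)}
    (h : (μ, ν) ∈ EqnSet B) :
    BooleanSubalgebra.closure (plusTwoGenerators B) ≤ Ultrafilter.equalizer μ ν := by
  obtain ⟨hB, hfwd, hbwd⟩ := h
  refine BooleanSubalgebra.closure_le.2 ?_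
  rintro _ (hL | ⟨L, hL, a, rfl⟩)
  · exact hB _ hL
  · constructor
    · intro hμ
      obtain ⟨γ, hγ, hLγ⟩ := exists_map_fLetter_eq_of_laStar_mem hμ
      obtain ⟨δ, rfl, hγδ⟩ := hfwd a γ hγ
      exact laStar_mem_map_fLetter ((hγδ L hL).1 hLγ)
    · intro hν
      obtain ⟨δ, hδ, hLδ⟩ := exists_map_fLetter_eq_of_laStar_mem hν
      obtain ⟨γ, rfl, hγδ⟩ := hbwd a δ hδ
      exact laStar_mem_map_fLetter ((hγδ L hL).2 hLδ)

lemma mem_eqnSet_of_closure_le_equalizer {B : Set (Set (List A))} (hB : IsBoolSubalg B)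
    {μ ν : Ultrafilter (List A)}
    (h : BooleanSubalgebra.closure (plusTwoGenerators B) ≤ Ultrafilter.equalizer μ ν) :
    (μ, ν) ∈ EqnSet B := by
  have hgen : plusTwoGenerators B ⊆ Ultrafilter.equalizer μ ν :=
    BooleanSubalgebra.subset_closure.trans h
  have hlift (μ' ν' : Ultrafilter (List A))
      (hagree : plusTwoGenerators B ⊆ Ultrafilter.equalizer μ' ν')
      (a : A) (γ : Ultrafilter (WordPos A)) (hγ : μ' = γ.map (fLetter a)) :
      ∃ δ : Ultrafilter (WordPos A), ν' = δ.map (fLetter a) ∧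
        ∀ L ∈ B, L ∈ γ.map fPrefix ↔ L ∈ δ.map fPrefix :=
    exists_map_fLetter_eq_of_forall_laStar_mem hB.toBooleanSubalgebra fun L hL hLγ =>
      (hagree (Or.inr ⟨L, hL, a, rfl⟩)).1 (hγ ▸ laStar_mem_map_fLetter hLγ)
  refine ⟨fun L hL => hgen (Or.inl hL), hlift μ ν hgen, fun a δ hδ => ?_⟩
  rw [Ultrafilter.equalizer_comm] at hgen
  obtain ⟨γ, hγ, hγδ⟩ := hlift ν μ hgen a δ hδ
  exact ⟨γ, hγ, fun L hL => (hγδ L hL).symm⟩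

end Words

theorem stmt18_general {A : Type*} (B : Set (Set (List A)))
    (hB : IsBoolSubalg B) (K : Set (List A)) :
    K ∈ BPlusTwo B ↔ ∀ μν ∈ EqnSet B, (K ∈ μν.1 ↔ K ∈ μν.2) := by
  rw [mem_bPlusTwo_iff]
  refine ⟨fun hK μν hμν => closure_le_equalizer_of_mem_eqnSet hμν hK, fun h => ?_⟩
  exact BooleanSubalgebra.mem_of_forall_le_equalizer fun μ ν hμν =>
    (h (μ, ν) (mem_eqnSet_of_closure_le_equalizer hB hμν)).1

/-- Completeness: a language belongs to `B⊕2` if and only if it satisfies every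
ultrafilter equation in `E(B⊕2)`. -/
theorem stmt18 {A : Type*} [Fintype A] (B : Set (Set (List A)))
    (hB : IsBoolSubalg B) (hq : QuotClosed B) (K : Set (List A)) :
    K ∈ BPlusTwo B ↔ ∀ μν ∈ EqnSet B, (K ∈ μν.1 ↔ K ∈ μν.2) :=
  stmt18_general B hB K
end
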